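/- The group Γ(2) of matrices in SL₂(ℤ) congruent to the identity mod 2, together with −I, is generated by T² = [[1,2],[0,1]] and g₂ = [[1,0],[2,1]]. -/

import Mathlib

open Matrix

/-- The matrix `T² = [[1,2],[0,1]]` as an element of `SL(2, ℤ)`. -/
def Tsq : Matrix.SpecialLinearGroup (Fin 2) ℤ :=
  ⟨!![1, 2; 0, 1], by norm_num [Matrix.det_fin_two_of]⟩

/-- The matrix `g₂ = [[1,0],[2,1]]` as an element of `SL(2, ℤ)`. -/
def gTwo : Matrix.SpecialLinearGroup (Fin 2) ℤ :=
  ⟨!![1, 0; 2, 1], by norm_num [Matrix.det_fin_two_of]⟩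

/-- The matrix `-I` as an element of `SL(2, ℤ)`. -/
def negI : Matrix.SpecialLinearGroup (Fin 2) ℤ :=
  ⟨!![-1, 0; 0, -1], by norm_num [Matrix.det_fin_two_of]⟩

/-!
Euclidean descent on the lower-left entry. For `[[a, b], [c, d]] ∈ Γ(2)` the entry `a` is odd
and `c` is even. Left multiplication by `T^(2n)` replaces `a` by `a + 2nc`, and by `g₂^m` replaces
`c` by `c + 2ma`. Because of the opposite parities one can reach `|a + 2nc| < |c|`, and then
`|c + 2ma'| < |a'|`, so `|c|` strictly decreases. When `c = 0` the determinant forces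
`a = d = ±1`, and the matrix is `±T^(2k)`.
-/

open scoped MatrixGroups

theorem Int.exists_natAbs_add_two_mul_lt_of_odd (x y : ℤ) (hy : y ≠ 0) (hxy : Odd (x + y)) :
    ∃ n : ℤ, (x + 2 * n * y).natAbs < y.natAbs := by
  have hm : 0 < 2 * y.natAbs := by omega
  set r := x.bmod (2 * y.natAbs)
  have hr_lo := Int.le_bmod (x := x) hm
  have hr_hi := Int.bmod_lt (x := x) hm
  obtain ⟨k, hk⟩ : 2 * y ∣ x - r := by
    have h := (Int.ModEq.dvd Int.bmod_emod : ((2 * y.natAbs : ℕ) : ℤ) ∣ x - r)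
    rwa [Nat.cast_mul, Int.natCast_natAbs, Nat.cast_ofNat, ← abs_two, ← abs_mul, abs_dvd] at h
  refine ⟨-k, ?_⟩
  obtain ⟨j, hj⟩ := hxy
  rw [show x + 2 * -k * y = r by linarith]
  -- `r` has the parity of `x`, opposite to that of `y`, so `|r| = |y|` is impossible.
  have hry_odd : r + y = 2 * (j - k * y) + 1 := by linarith
  omega

theorem coe_Tsq_zpow (n : ℤ) :
    ((Tsq ^ n : SL(2, ℤ)) : Matrix (Fin 2) (Fin 2) ℤ) = !![1, 2 * n; 0, 1] := by
  have : Tsq = ModularGroup.T ^ (2 : ℤ) := Subtype.ext (ModularGroup.coe_T_zpow 2).symm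
  rw [this, ← _root_.zpow_mul, ModularGroup.coe_T_zpow]

theorem coe_gTwo : (gTwo : Matrix (Fin 2) (Fin 2) ℤ) = !![1, 0; 2, 1] := rfl

theorem coe_gTwo_zpow (n : ℤ) :
    ((gTwo ^ n : SL(2, ℤ)) : Matrix (Fin 2) (Fin 2) ℤ) = !![1, 0; 2 * n, 1] := by
  induction n with
  | zero => simp [Matrix.one_fin_two]
  | succ n ih =>
    rw [_root_.zpow_add_one, Matrix.SpecialLinearGroup.coe_mul, ih, coe_gTwo, mul_fin_two]
    congrm !![?_, ?_; ?_, ?_] <;> ring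
  | pred n ih =>
    rw [_root_.zpow_sub_one, Matrix.SpecialLinearGroup.coe_mul, ih,
      Matrix.SpecialLinearGroup.coe_inv, coe_gTwo, adjugate_fin_two_of, mul_fin_two]
    congrm !![?_, ?_; ?_, ?_] <;> ring

theorem Tsq_zpow_mul_apply_zero_zero (n : ℤ) (A : SL(2, ℤ)) :
    (Tsq ^ n * A) 0 0 = A 0 0 + 2 * n * A 1 0 := by
  simp [coe_Tsq_zpow, Matrix.mul_apply, Fin.sum_univ_two]

theorem Tsq_zpow_mul_apply_one_zero (n : ℤ) (A : SL(2, ℤ)) : (Tsq ^ n * A) 1 0 = A 1 0 := by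
  simp [coe_Tsq_zpow, Matrix.mul_apply, Fin.sum_univ_two]

theorem gTwo_zpow_mul_apply_one_zero (n : ℤ) (A : SL(2, ℤ)) :
    (gTwo ^ n * A) 1 0 = A 1 0 + 2 * n * A 0 0 := by
  simp [coe_gTwo_zpow, Matrix.mul_apply, Fin.sum_univ_two, add_comm]

namespace CongruenceSubgroup

theorem mem_Gamma_two_iff {γ : SL(2, ℤ)} :
    γ ∈ Gamma 2 ↔ Odd (γ 0 0) ∧ Even (γ 0 1) ∧ Even (γ 1 0) ∧ Odd (γ 1 1) := by
  simp only [Gamma_mem, ZMod.intCast_eq_one_iff_odd, ZMod.intCast_eq_zero_iff_even]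

theorem closure_Tsq_gTwo_negI_le_Gamma_two : Subgroup.closure {Tsq, gTwo, negI} ≤ Gamma 2 := by
  rw [Subgroup.closure_le]
  rintro _ (rfl | rfl | rfl) <;> exact mem_Gamma_two_iff.2 (by decide)

theorem mem_closure_of_apply_one_zero_eq_zero {A : SL(2, ℤ)} (hA : A ∈ Gamma 2)
    (hc : A 1 0 = 0) : A ∈ Subgroup.closure {Tsq, gTwo, negI} := by
  obtain ⟨-, ⟨k, hk⟩, -, -⟩ := mem_Gamma_two_iff.1 hA
  have hdet : A 0 0 * A 1 1 = 1 := by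
    have := A.det_coe
    rwa [det_fin_two, hc, mul_zero, sub_zero] at this
  have hT : Tsq ∈ Subgroup.closure {Tsq, gTwo, negI} := Subgroup.subset_closure (by simp)
  rcases Int.eq_one_or_neg_one_of_mul_eq_one' hdet with ⟨ha, hd⟩ | ⟨ha, hd⟩
  · have hA_eq : A = Tsq ^ k := by
      ext i j; fin_cases i <;> fin_cases j <;> simp [coe_Tsq_zpow, ha, hc, hd, hk, two_mul]
    exact hA_eq ▸ zpow_mem hT k
  · have hA_eq : A = negI * Tsq ^ (-k) := by
      ext i j
      rw [Matrix.SpecialLinearGroup.coe_mul, coe_Tsq_zpow]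
      fin_cases i <;> fin_cases j <;> simp [negI, ha, hc, hd, hk, two_mul]
    exact hA_eq ▸ mul_mem (Subgroup.subset_closure (by simp)) (zpow_mem hT (-k))

theorem exists_mem_closure_natAbs_mul_apply_one_zero_lt {A : SL(2, ℤ)} (hA : A ∈ Gamma 2)
    (hc : A 1 0 ≠ 0) :
    ∃ B ∈ Subgroup.closure {Tsq, gTwo, negI}, ((B * A) 1 0).natAbs < (A 1 0).natAbs := by
  obtain ⟨ha_odd, -, hc_even, -⟩ := mem_Gamma_two_iff.1 hA
  obtain ⟨n, hn⟩ :=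
    Int.exists_natAbs_add_two_mul_lt_of_odd (A 0 0) (A 1 0) hc (ha_odd.add_even hc_even)
  have ha'_odd : Odd (A 0 0 + 2 * n * A 1 0) := ha_odd.add_even (by simp [mul_assoc])
  obtain ⟨m, hm⟩ := Int.exists_natAbs_add_two_mul_lt_of_odd (A 1 0) _
    (fun h ↦ by simp [h] at ha'_odd) (hc_even.add_odd ha'_odd)
  have hg : gTwo ∈ Subgroup.closure {Tsq, gTwo, negI} := Subgroup.subset_closure (by simp)
  have hT : Tsq ∈ Subgroup.closure {Tsq, gTwo, negI} := Subgroup.subset_closure (by simp)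
  refine ⟨gTwo ^ m * Tsq ^ n, mul_mem (zpow_mem hg m) (zpow_mem hT n), ?_⟩
  rw [mul_assoc, gTwo_zpow_mul_apply_one_zero, Tsq_zpow_mul_apply_zero_zero,
    Tsq_zpow_mul_apply_one_zero]
  exact hm.trans hn

theorem Gamma_two_le_closure_Tsq_gTwo_negI : Gamma 2 ≤ Subgroup.closure {Tsq, gTwo, negI} := by
  intro A hA
  induction h : (A 1 0).natAbs using Nat.strong_induction_on generalizing A with
  | _ k ih =>
  by_cases hc : A 1 0 = 0
  · exact mem_closure_of_apply_one_zero_eq_zero hA hc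
  obtain ⟨B, hB, hlt⟩ := exists_mem_closure_natAbs_mul_apply_one_zero_lt hA hc
  have hBA := ih _ (h ▸ hlt) (mul_mem (closure_Tsq_gTwo_negI_le_Gamma_two hB) hA) rfl
  simpa using mul_mem (inv_mem hB) hBA

end CongruenceSubgroup

/-- `Γ(2)`, together with `-I`, is generated by `T²` and `g₂`. -/
theorem Gamma_two_generated :
    CongruenceSubgroup.Gamma 2 = Subgroup.closure {Tsq, gTwo, negI} :=
  le_antisymm CongruenceSubgroup.Gamma_two_le_closure_Tsq_gTwo_negI
    CongruenceSubgroup.closure_Tsq_gTwo_negI_le_Gamma_two
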